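/- arXiv:2008.09864 — 2 statements merged into one kernel-verified Lean document; each statement's English description precedes it below -/
import Mathlib

section
/- Consider the generic GCN layer H_{l+1} = σ(ÂH_lW_l), where σ is entrywise ReLU, is the augmented normalized adjacency of a graph with eigenvalue-1 eigenspace spanned by the non-negative orthogonal basis Ê, λ < 1 is the largest absolute value among the remaining eigenvalues of Â, and every W_l has largest singular value at most s. Then d_M(H_{l+1}) ≤ sλ · d_M(H_l), and consequently d_M(H_l) ≤ (sλ)^l d_M(H_0). In particular if sλ < 1, then d_M(H_l) → 0 as l → ∞. -/
open Matrix Filter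

noncomputable def frobNorm {N C : ℕ} (H : Matrix (Fin N) (Fin C) ℝ) : ℝ :=
  Real.sqrt (∑ i, ∑ j, (H i j) ^ 2)

noncomputable def distTo {N C : ℕ} (S : Set (Matrix (Fin N) (Fin C) ℝ))
    (H : Matrix (Fin N) (Fin C) ℝ) : ℝ :=
  sInf ((fun Y => frobNorm (H - Y)) '' S)

def relu {N C : ℕ} (H : Matrix (Fin N) (Fin C) ℝ) : Matrix (Fin N) (Fin C) ℝ :=
  Matrix.of fun i j => max (H i j) 0

/-! The distance to `M = {E C}` is attained at the orthogonal projection `E Eᵀ H`: since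
`Eᵀ E = 1` the residual `H - E Eᵀ H` is orthogonal to `M`, and Pythagoras applies. Each map of a
layer is compared through this residual. `Â` fixes `M` and shrinks every column orthogonal to the
columns of `E` by `λ`: in an orthonormal eigenbasis of the symmetric `Â` such a column has no
component along eigenvalue `1`. Right multiplication by `W` preserves `M` and shrinks every row
by `s`. ReLU commutes with `E`, whose rows have at most one nonzero entry, which is nonnegative,
and ReLU is 1-Lipschitz entrywise. Iterating the one-layer bound gives the geometric decay. -/

theorem OrthonormalBasis.sum_sq_dotProduct {ι n : Type*} [Fintype ι] [Fintype n]
    (b : OrthonormalBasis ι ℝ (EuclideanSpace ℝ n)) (x : n → ℝ) :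
    ∑ k, (⇑(b k) ⬝ᵥ x) ^ 2 = ∑ i, x i ^ 2 := by
  simpa [EuclideanSpace.inner_eq_star_dotProduct, dotProduct_comm, EuclideanSpace.real_norm_sq_eq]
    using b.sum_sq_inner_right (WithLp.toLp 2 x)

theorem Matrix.IsSymm.sum_sq_mulVec_le_of_perp_fixed {n : Type*} [Fintype n] [DecidableEq n]
    {A : Matrix n n ℝ} (hA : A.IsSymm) {lam : ℝ}
    (hspec : ∀ (μ : ℝ) (v : n → ℝ), v ≠ 0 → A *ᵥ v = μ • v → μ = 1 ∨ |μ| ≤ lam)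
    {v : n → ℝ} (hv : ∀ w, A *ᵥ w = w → w ⬝ᵥ v = 0) :
    ∑ i, (A *ᵥ v) i ^ 2 ≤ lam ^ 2 * ∑ i, v i ^ 2 := by
  have hH : A.IsHermitian := isHermitian_iff_isSymm.mpr hA
  set b := hH.eigenvectorBasis
  set μ := hH.eigenvalues
  have hcoef (k : n) : ⇑(b k) ⬝ᵥ (A *ᵥ v) = μ k * (⇑(b k) ⬝ᵥ v) := by
    rw [dotProduct_mulVec, ← mulVec_transpose, hA.eq, hH.mulVec_eigenvectorBasis, smul_dotProduct,
      smul_eq_mul]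
  have hterm (k : n) : (μ k * (⇑(b k) ⬝ᵥ v)) ^ 2 ≤ lam ^ 2 * (⇑(b k) ⬝ᵥ v) ^ 2 := by
    have hbk : A *ᵥ ⇑(b k) = μ k • ⇑(b k) := hH.mulVec_eigenvectorBasis k
    rcases hspec (μ k) (b k) (by simpa using b.orthonormal.ne_zero k) hbk with hfix | hsmall
    · rw [hv (b k) (by rw [hbk, hfix, one_smul])]
      simp
    · rw [mul_pow, ← sq_abs (μ k)]
      gcongr
  calc ∑ i, (A *ᵥ v) i ^ 2 = ∑ k, (μ k * (⇑(b k) ⬝ᵥ v)) ^ 2 := by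
        rw [← b.sum_sq_dotProduct (A *ᵥ v)]; simp_rw [hcoef]
    _ ≤ ∑ k, lam ^ 2 * (⇑(b k) ⬝ᵥ v) ^ 2 := Finset.sum_le_sum fun k _ => hterm k
    _ = lam ^ 2 * ∑ i, v i ^ 2 := by rw [← Finset.mul_sum, b.sum_sq_dotProduct v]

lemma Matrix.dotProduct_eq_zero_of_mem_span_cols {n m : Type*} [Fintype n] [Fintype m]
    {E : Matrix n m ℝ} {r : n → ℝ} (hr : Eᵀ *ᵥ r = 0) {w : n → ℝ}
    (hw : w ∈ Submodule.span ℝ (Set.range fun j i => E i j)) : w ⬝ᵥ r = 0 := by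
  induction hw using Submodule.span_induction with
  | mem _ hcol => obtain ⟨j, rfl⟩ := hcol; exact congrFun hr j
  | zero => exact zero_dotProduct r
  | add _ _ _ _ hx hy => rw [add_dotProduct, hx, hy, add_zero]
  | smul a _ _ hx => rw [smul_dotProduct, hx, smul_zero]

section FrobeniusNorm

variable {N M C : ℕ}

lemma frobNorm_nonneg (H : Matrix (Fin N) (Fin C) ℝ) : 0 ≤ frobNorm H := Real.sqrt_nonneg _

lemma frobNorm_sq (H : Matrix (Fin N) (Fin C) ℝ) : frobNorm H ^ 2 = ∑ i, ∑ j, H i j ^ 2 :=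
  Real.sq_sqrt (by positivity)

lemma frobNorm_transpose (H : Matrix (Fin N) (Fin C) ℝ) : frobNorm Hᵀ = frobNorm H := by
  rw [frobNorm, frobNorm, Finset.sum_comm]
  rfl

lemma frobNorm_le_mul_iff {k : ℝ} (hk : 0 ≤ k) (A B : Matrix (Fin N) (Fin C) ℝ) :
    frobNorm A ≤ k * frobNorm B ↔ frobNorm A ^ 2 ≤ k ^ 2 * frobNorm B ^ 2 := by
  rw [← mul_pow, pow_le_pow_iff_left₀ (frobNorm_nonneg A) (mul_nonneg hk (frobNorm_nonneg B))
    two_ne_zero]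

lemma frobNorm_sq_eq_trace (H : Matrix (Fin N) (Fin C) ℝ) : frobNorm H ^ 2 = trace (Hᵀ * H) := by
  rw [frobNorm_sq, Finset.sum_comm]
  simp only [trace, diag_apply, mul_apply, transpose_apply, sq]

lemma frobNorm_add_mul_sq_of_transpose_mul_eq_zero {E : Matrix (Fin N) (Fin M) ℝ}
    {R : Matrix (Fin N) (Fin C) ℝ} (hR : Eᵀ * R = 0) (X : Matrix (Fin M) (Fin C) ℝ) :
    frobNorm (R + E * X) ^ 2 = frobNorm R ^ 2 + frobNorm (E * X) ^ 2 := by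
  have hRE : Rᵀ * E = 0 := by rw [← transpose_transpose E, ← transpose_mul, hR, transpose_zero]
  simp only [frobNorm_sq_eq_trace, transpose_add, transpose_mul, Matrix.add_mul, Matrix.mul_add,
    trace_add, Matrix.mul_assoc, ← Matrix.mul_assoc Rᵀ, hRE, hR, Matrix.zero_mul, Matrix.mul_zero,
    trace_zero]
  ring

lemma frobNorm_relu_sub_le (X Y : Matrix (Fin N) (Fin C) ℝ) :
    frobNorm (relu X - relu Y) ≤ frobNorm (X - Y) := by
  refine Real.sqrt_le_sqrt (Finset.sum_le_sum fun i _ => Finset.sum_le_sum fun j _ => ?_)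
  simp only [Matrix.sub_apply, relu, of_apply]
  rw [← sq_abs, ← sq_abs (X i j - Y i j)]
  exact pow_le_pow_left₀ (abs_nonneg _) (abs_max_sub_max_le_abs _ _ _) 2

lemma frobNorm_mul_right_le {k : ℝ} (hk : 0 ≤ k) (X : Matrix (Fin N) (Fin C) ℝ)
    (W : Matrix (Fin C) (Fin C) ℝ)
    (hW : ∀ i, ∑ j, (X i ᵥ* W) j ^ 2 ≤ k ^ 2 * ∑ j, X i j ^ 2) :
    frobNorm (X * W) ≤ k * frobNorm X := by
  rw [frobNorm_le_mul_iff hk, frobNorm_sq, frobNorm_sq, Finset.mul_sum]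
  exact Finset.sum_le_sum fun i _ => hW i

lemma frobNorm_mul_left_le {k : ℝ} (hk : 0 ≤ k) (A : Matrix (Fin N) (Fin N) ℝ)
    (X : Matrix (Fin N) (Fin C) ℝ)
    (hA : ∀ j, ∑ i, (A *ᵥ Xᵀ j) i ^ 2 ≤ k ^ 2 * ∑ i, X i j ^ 2) :
    frobNorm (A * X) ≤ k * frobNorm X := by
  rw [← frobNorm_transpose, ← frobNorm_transpose X, transpose_mul]
  refine frobNorm_mul_right_le hk _ _ fun j => ?_
  rw [vecMul_transpose]
  exact hA j

end FrobeniusNorm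

section ColumnSpace

variable {N M C : ℕ} {E : Matrix (Fin N) (Fin M) ℝ}

def mulRange (E : Matrix (Fin N) (Fin M) ℝ) : Set (Matrix (Fin N) (Fin C) ℝ) :=
  {H | ∃ Cm : Matrix (Fin M) (Fin C) ℝ, H = E * Cm}

lemma distTo_le_frobNorm_sub (X : Matrix (Fin N) (Fin C) ℝ) (Cm : Matrix (Fin M) (Fin C) ℝ) :
    distTo (mulRange E) X ≤ frobNorm (X - E * Cm) :=
  csInf_le ⟨0, by rintro _ ⟨Y, -, rfl⟩; exact frobNorm_nonneg _⟩ ⟨E * Cm, ⟨Cm, rfl⟩, rfl⟩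

lemma transpose_mul_sub_proj_eq_zero (hE : Eᵀ * E = 1) (X : Matrix (Fin N) (Fin C) ℝ) :
    Eᵀ * (X - E * (Eᵀ * X)) = 0 := by
  rw [Matrix.mul_sub, ← Matrix.mul_assoc, hE, Matrix.one_mul, sub_self]

lemma distTo_eq_frobNorm_sub_proj (hE : Eᵀ * E = 1) (X : Matrix (Fin N) (Fin C) ℝ) :
    distTo (mulRange E) X = frobNorm (X - E * (Eᵀ * X)) := by
  have hR := transpose_mul_sub_proj_eq_zero hE X
  refine le_antisymm (distTo_le_frobNorm_sub X _) (le_csInf ⟨_, _, ⟨Eᵀ * X, rfl⟩, rfl⟩ ?_)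
  rintro _ ⟨_, ⟨Cm, rfl⟩, rfl⟩
  have hsplit : X - E * Cm = (X - E * (Eᵀ * X)) + E * (Eᵀ * X - Cm) := by
    rw [Matrix.mul_sub]; abel
  rw [← pow_le_pow_iff_left₀ (frobNorm_nonneg _) (frobNorm_nonneg _) two_ne_zero, hsplit,
    frobNorm_add_mul_sq_of_transpose_mul_eq_zero hR]
  exact le_add_of_nonneg_right (sq_nonneg _)

lemma distTo_nonneg (X : Matrix (Fin N) (Fin C) ℝ) : 0 ≤ distTo (mulRange E) X :=
  Real.sInf_nonneg (by rintro _ ⟨Y, -, rfl⟩; exact frobNorm_nonneg _)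

lemma relu_mul_eq_mul_relu (hnonneg : ∀ i m, 0 ≤ E i m)
    (hdisj : ∀ i m m', E i m ≠ 0 → E i m' ≠ 0 → m = m') (Cm : Matrix (Fin M) (Fin C) ℝ) :
    relu (E * Cm) = E * relu Cm := by
  ext i j
  simp only [relu, of_apply, mul_apply]
  by_cases hrow : ∃ m₀, E i m₀ ≠ 0
  · obtain ⟨m₀, hm₀⟩ := hrow
    have hsingle : ∀ x : Fin M → ℝ, ∑ m, E i m * x m = E i m₀ * x m₀ :=
      fun x => Finset.sum_eq_single_of_mem m₀ (Finset.mem_univ _) fun m _ hm => by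
        rw [not_ne_iff.mp fun h => hm (hdisj i m m₀ h hm₀), zero_mul]
    rw [hsingle, hsingle (fun m => max (Cm m j) 0), mul_max_of_nonneg _ _ (hnonneg i m₀), mul_zero]
  · push Not at hrow
    simp [hrow]

lemma distTo_relu_le (hE : Eᵀ * E = 1) (hnonneg : ∀ i m, 0 ≤ E i m)
    (hdisj : ∀ i m m', E i m ≠ 0 → E i m' ≠ 0 → m = m') (X : Matrix (Fin N) (Fin C) ℝ) :
    distTo (mulRange E) (relu X) ≤ distTo (mulRange E) X := by
  rw [distTo_eq_frobNorm_sub_proj hE X]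
  calc _ ≤ frobNorm (relu X - E * relu (Eᵀ * X)) := distTo_le_frobNorm_sub _ _
    _ = frobNorm (relu X - relu (E * (Eᵀ * X))) := by rw [relu_mul_eq_mul_relu hnonneg hdisj]
    _ ≤ _ := frobNorm_relu_sub_le _ _

lemma distTo_mul_right_le (hE : Eᵀ * E = 1) {s : ℝ} (hs : 0 ≤ s) (W : Matrix (Fin C) (Fin C) ℝ)
    (hW : ∀ x, ∑ j, (x ᵥ* W) j ^ 2 ≤ s ^ 2 * ∑ j, x j ^ 2) (X : Matrix (Fin N) (Fin C) ℝ) :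
    distTo (mulRange E) (X * W) ≤ s * distTo (mulRange E) X := by
  rw [distTo_eq_frobNorm_sub_proj hE X]
  calc _ ≤ frobNorm (X * W - E * (Eᵀ * X * W)) := distTo_le_frobNorm_sub _ _
    _ = frobNorm ((X - E * (Eᵀ * X)) * W) := by rw [Matrix.sub_mul, Matrix.mul_assoc E]
    _ ≤ _ := frobNorm_mul_right_le hs _ _ fun i => hW _

lemma distTo_mul_left_le (hE : Eᵀ * E = 1) {lam : ℝ} (hlam : 0 ≤ lam)
    {A : Matrix (Fin N) (Fin N) ℝ} (hAE : A * E = E)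
    (hA : ∀ r, Eᵀ *ᵥ r = 0 → ∑ i, (A *ᵥ r) i ^ 2 ≤ lam ^ 2 * ∑ i, r i ^ 2)
    (X : Matrix (Fin N) (Fin C) ℝ) :
    distTo (mulRange E) (A * X) ≤ lam * distTo (mulRange E) X := by
  have hR := transpose_mul_sub_proj_eq_zero hE X
  rw [distTo_eq_frobNorm_sub_proj hE X]
  calc _ ≤ frobNorm (A * X - E * (Eᵀ * X)) := distTo_le_frobNorm_sub _ _
    _ = frobNorm (A * (X - E * (Eᵀ * X))) := by rw [Matrix.mul_sub, ← Matrix.mul_assoc A E, hAE]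
    _ ≤ _ := frobNorm_mul_left_le hlam _ _ fun j =>
      hA _ (funext fun m => congrFun (congrFun hR m) j)

end ColumnSpace

theorem gcn_over_smoothing_general
    (N M C : ℕ) (hatA : Matrix (Fin N) (Fin N) ℝ) (hsymm : hatA.IsSymm)
    (E : Matrix (Fin N) (Fin M) ℝ) (hortho : Eᵀ * E = 1)
    (hnonneg : ∀ i m, 0 ≤ E i m)
    (hdisj : ∀ i m m', E i m ≠ 0 → E i m' ≠ 0 → m = m')
    (lam : ℝ) (hlam0 : 0 ≤ lam)
    (hEig1 : ∀ v : Fin N → ℝ, hatA.mulVec v = v ↔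
      v ∈ Submodule.span ℝ (Set.range fun m => fun i => E i m))
    (hOther : ∀ (μ : ℝ) (v : Fin N → ℝ), v ≠ 0 → hatA.mulVec v = μ • v →
      μ = 1 ∨ |μ| ≤ lam)
    (s : ℝ) (hs : 0 ≤ s)
    (W : ℕ → Matrix (Fin C) (Fin C) ℝ)
    (hW : ∀ l, ∀ x : Fin C → ℝ,
      ∑ j, (Matrix.vecMul x (W l) j) ^ 2 ≤ s ^ 2 * ∑ j, (x j) ^ 2)
    (MS : Set (Matrix (Fin N) (Fin C) ℝ))
    (hMS : MS = {H | ∃ Cm : Matrix (Fin M) (Fin C) ℝ, H = E * Cm})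
    (H : ℕ → Matrix (Fin N) (Fin C) ℝ)
    (hrec : ∀ l, H (l + 1) = relu (hatA * H l * W l)) :
    (∀ l, distTo MS (H (l + 1)) ≤ s * lam * distTo MS (H l)) ∧
    (∀ l, distTo MS (H l) ≤ (s * lam) ^ l * distTo MS (H 0)) ∧
    (s * lam < 1 → Tendsto (fun l => distTo MS (H l)) atTop (nhds 0)) := by
  subst hMS
  have hAE : hatA * E = E := by
    ext i m
    exact congrFun ((hEig1 _).2 (Submodule.subset_span ⟨m, rfl⟩)) i
  have hA (r : Fin N → ℝ) (hr : Eᵀ *ᵥ r = 0) :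
      ∑ i, (hatA *ᵥ r) i ^ 2 ≤ lam ^ 2 * ∑ i, r i ^ 2 :=
    hsymm.sum_sq_mulVec_le_of_perp_fixed hOther fun w hw =>
      dotProduct_eq_zero_of_mem_span_cols hr ((hEig1 w).1 hw)
  have hstep (l : ℕ) : distTo (mulRange E) (H (l + 1)) ≤ s * lam * distTo (mulRange E) (H l) := by
    rw [hrec l, mul_assoc]
    calc _ ≤ distTo (mulRange E) (hatA * H l * W l) := distTo_relu_le hortho hnonneg hdisj _
      _ ≤ s * distTo (mulRange E) (hatA * H l) := distTo_mul_right_le hortho hs _ (hW l) _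
      _ ≤ s * (lam * distTo (mulRange E) (H l)) :=
        mul_le_mul_of_nonneg_left (distTo_mul_left_le hortho hlam0 hAE hA _) hs
  have hgeom (l : ℕ) : distTo (mulRange E) (H l) ≤ (s * lam) ^ l * distTo (mulRange E) (H 0) :=
    le_geom (u := fun l => distTo (mulRange E) (H l)) (mul_nonneg hs hlam0) l fun k _ => hstep k
  refine ⟨hstep, hgeom, fun hsl => squeeze_zero (fun l => distTo_nonneg _) hgeom ?_⟩
  simpa using (tendsto_pow_atTop_nhds_zero_of_lt_one (mul_nonneg hs hlam0) hsl).mul_const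
    (distTo (mulRange E) (H 0))

/-- Generic GCN `H_{l+1} = σ(Â H_l W_l)` over-smooths:
`d_M(H_{l+1}) ≤ sλ·d_M(H_l)`, hence `d_M(H_l) ≤ (sλ)^l d_M(H_0)` and, if
`sλ < 1`, `d_M(H_l) → 0`. -/
theorem gcn_over_smoothing
    (N M C : ℕ) (hatA : Matrix (Fin N) (Fin N) ℝ) (hsymm : hatA.IsSymm)
    (E : Matrix (Fin N) (Fin M) ℝ) (hortho : Eᵀ * E = 1)
    (hnonneg : ∀ i m, 0 ≤ E i m)
    (hdisj : ∀ i m m', E i m ≠ 0 → E i m' ≠ 0 → m = m')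
    (lam : ℝ) (hlam0 : 0 ≤ lam) (hlam1 : lam < 1)
    (hEig1 : ∀ v : Fin N → ℝ, hatA.mulVec v = v ↔
      v ∈ Submodule.span ℝ (Set.range fun m => fun i => E i m))
    (hOther : ∀ (μ : ℝ) (v : Fin N → ℝ), v ≠ 0 → hatA.mulVec v = μ • v →
      μ = 1 ∨ |μ| ≤ lam)
    (s : ℝ) (hs : 0 ≤ s)
    (W : ℕ → Matrix (Fin C) (Fin C) ℝ)
    (hW : ∀ l, ∀ x : Fin C → ℝ,
      ∑ j, (Matrix.vecMul x (W l) j) ^ 2 ≤ s ^ 2 * ∑ j, (x j) ^ 2)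
    (MS : Set (Matrix (Fin N) (Fin C) ℝ))
    (hMS : MS = {H | ∃ Cm : Matrix (Fin M) (Fin C) ℝ, H = E * Cm})
    (H : ℕ → Matrix (Fin N) (Fin C) ℝ)
    (hrec : ∀ l, H (l + 1) = relu (hatA * H l * W l)) :
    (∀ l, distTo MS (H (l + 1)) ≤ s * lam * distTo MS (H l)) ∧
    (∀ l, distTo MS (H l) ≤ (s * lam) ^ l * distTo MS (H 0)) ∧
    (s * lam < 1 → Tendsto (fun l => distTo MS (H l)) atTop (nhds 0)) :=
  gcn_over_smoothing_general N M C hatA hsymm E hortho hnonneg hdisj lam hlam0 hEig1 hOther s hs W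
    hW MS hMS H hrec
end

section
/- Consider the APPNP layer H_{l+1} = (1−β)ÂH_l + βH_0 with 0 < β ≤ 1, Â symmetric with second-largest absolute eigenvalue λ < 1 (eigenvalue-1 eigenspace spanned by Ê). Set v = (1−β)λ and r = β d_M(H_0)/(1−v). Then d_M(H_{l+1}) − r ≤ v (d_M(H_l) − r), and hence d_M(H_l) ≤ r + v^l (d_M(H_0) − r) for all l, so limsup_{l→∞} d_M(H_l) ≤ r. -/
open Matrix Filter

/-!
The distance `d(X)` to `M = {E C}` is the norm of `X` in the quotient by the subspace `M`, so it
is subadditive and homogeneous. Since `EᵀE = 1`, `EEᵀ` is the orthogonal projection onto `M` and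
`d(X) = ‖R‖` with `R = X - EEᵀX`. Now `Â` fixes `EEᵀX`, and the columns of `R` are orthogonal to
the `1`-eigenspace of `Â`, on whose complement `Â` has norm at most `λ` (expand in an eigenbasis),
so `d(ÂX) ≤ ‖ÂR‖ ≤ λ d(X)`. Hence `d(H_{l+1}) ≤ v d(H_l) + β d(H_0)`: an affine contraction with
fixed point `r`, and iterating it gives the bound and the `limsup`.
-/

open Metric InnerProductSpace

attribute [local instance] Matrix.frobeniusNormedAddCommGroup Matrix.frobeniusNormedSpace

section InnerProductSpace

variable {V : Type*} [NormedAddCommGroup V] [InnerProductSpace ℝ V]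

theorem LinearMap.IsSymmetricProjection.norm_apply_le {p : V →ₗ[ℝ] V}
    (hp : p.IsSymmetricProjection) (x : V) : ‖p x‖ ≤ ‖x‖ := by
  have hsq : ‖p x‖ ^ 2 ≤ ‖x‖ * ‖p x‖ := by
    calc ‖p x‖ ^ 2 = ⟪x, p (p x)⟫_ℝ := by rw [← hp.isSymmetric, real_inner_self_eq_norm_sq]
      _ = ⟪x, p x⟫_ℝ := by rw [← Module.End.mul_apply, hp.isIdempotentElem.eq]
      _ ≤ ‖x‖ * ‖p x‖ := real_inner_le_norm _ _
  nlinarith [norm_nonneg (p x), norm_nonneg x]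

theorem LinearMap.IsSymmetric.norm_apply_le_of_inner_fixed_eq_zero [FiniteDimensional ℝ V]
    {T : V →ₗ[ℝ] V} (hT : T.IsSymmetric) {lam : ℝ} (hlam : 0 ≤ lam)
    (hspec : ∀ (μ : ℝ) (u : V), u ≠ 0 → T u = μ • u → μ = 1 ∨ |μ| ≤ lam)
    {w : V} (hw : ∀ u, T u = u → ⟪u, w⟫_ℝ = 0) : ‖T w‖ ≤ lam * ‖w‖ := by
  set b := hT.eigenvectorBasis rfl
  have hcoeff : ∀ i, ‖⟪b i, T w⟫_ℝ‖ ^ 2 ≤ lam ^ 2 * ‖⟪b i, w⟫_ℝ‖ ^ 2 := fun i => by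
    have hTb := hT.apply_eigenvectorBasis rfl i
    rw [← hT, hTb, real_inner_smul_left, norm_mul, mul_pow]
    rcases hspec _ _ (b.orthonormal.ne_zero i) hTb with h1 | hle
    · rw [hw _ (by rw [hTb, h1, one_smul])]
      simp
    · gcongr
      simpa using hle
  rw [← pow_le_pow_iff_left₀ (norm_nonneg _) (by positivity) two_ne_zero, mul_pow,
    ← b.sum_sq_norm_inner_right, ← b.sum_sq_norm_inner_right, Finset.mul_sum]
  exact Finset.sum_le_sum fun i _ => hcoeff i

end InnerProductSpace

section Quotient

variable {𝕜 V : Type*} [NormedField 𝕜] [SeminormedAddCommGroup V] [NormedSpace 𝕜 V]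
  (K : Submodule 𝕜 V)

theorem Submodule.infDist_eq_norm_mkQ (x : V) : infDist x K = ‖K.mkQ x‖ :=
  (QuotientAddGroup.norm_mk (S := K.toAddSubgroup) x).symm

theorem Submodule.infDist_add_le (x y : V) : infDist (x + y) K ≤ infDist x K + infDist y K := by
  simpa only [infDist_eq_norm_mkQ, map_add] using norm_add_le _ _

theorem Submodule.infDist_smul (c : 𝕜) (x : V) : infDist (c • x) K = ‖c‖ * infDist x K := by
  simp only [infDist_eq_norm_mkQ, map_smul, norm_smul]

end Quotient

theorem Submodule.infDist_smul_add_smul_le {V : Type*} [SeminormedAddCommGroup V]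
    [NormedSpace ℝ V] (K : Submodule ℝ V) {s t : ℝ} (hs : 0 ≤ s) (ht : 0 ≤ t) (x y : V) :
    infDist (s • x + t • y) K ≤ s * infDist x K + t * infDist y K := by
  refine (K.infDist_add_le _ _).trans_eq ?_
  rw [K.infDist_smul, K.infDist_smul, Real.norm_of_nonneg hs, Real.norm_of_nonneg ht]

section Frobenius

variable {l m n : Type*}

theorem frobNorm_eq_norm {N C : ℕ} (X : Matrix (Fin N) (Fin C) ℝ) : frobNorm X = ‖X‖ := by
  rw [frobNorm, frobenius_norm_def, Real.sqrt_eq_rpow]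
  simp

theorem distTo_eq_infDist {N C : ℕ} (S : Set (Matrix (Fin N) (Fin C) ℝ))
    (X : Matrix (Fin N) (Fin C) ℝ) : distTo S X = infDist X S := by
  simp only [distTo, infDist_eq_iInf, sInf_image', frobNorm_eq_norm, dist_eq_norm]

theorem Matrix.col_mul [Fintype m] (A : Matrix l m ℝ) (B : Matrix m n ℝ) (j : n) :
    (A * B).col j = A *ᵥ B.col j := by
  ext i
  simp [mul_apply, mulVec, dotProduct]

theorem frobenius_norm_sq_eq_sum_col [Fintype m] [Fintype n] (W : Matrix m n ℝ) :
    ‖W‖ ^ 2 = ∑ j, ‖WithLp.toLp 2 (W.col j)‖ ^ 2 := by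
  rw [← frobenius_norm_transpose]
  change ‖WithLp.toLp 2 fun j => WithLp.toLp 2 (Wᵀ j)‖ ^ 2 = _
  rw [PiLp.norm_sq_eq_of_L2]
  rfl

theorem frobenius_norm_mul_le_of_forall_col [Fintype m] [Fintype n] {A : Matrix m m ℝ}
    {W : Matrix m n ℝ} {c : ℝ} (hc : 0 ≤ c)
    (h : ∀ j, ‖WithLp.toLp 2 (A *ᵥ W.col j)‖ ≤ c * ‖WithLp.toLp 2 (W.col j)‖) :
    ‖A * W‖ ≤ c * ‖W‖ := by
  rw [← pow_le_pow_iff_left₀ (norm_nonneg _) (by positivity) two_ne_zero, mul_pow,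
    frobenius_norm_sq_eq_sum_col, frobenius_norm_sq_eq_sum_col, Finset.mul_sum]
  refine Finset.sum_le_sum fun j _ => ?_
  rw [col_mul, ← mul_pow]
  exact pow_le_pow_left₀ (norm_nonneg _) (h j) 2

theorem dotProduct_eq_zero_of_mem_span_col [Fintype m] [Fintype n] {E : Matrix m n ℝ}
    {u w : m → ℝ} (hu : u ∈ Submodule.span ℝ (Set.range E.col)) (hw : Eᵀ *ᵥ w = 0) :
    u ⬝ᵥ w = 0 := by
  obtain ⟨c, rfl⟩ := (E.range_mulVecLin ▸ hu : u ∈ LinearMap.range E.mulVecLin)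
  rw [mulVecLin_apply, dotProduct_comm, dotProduct_mulVec, ← mulVec_transpose, hw,
    zero_dotProduct]

end Frobenius

section Contraction

variable {n m k : Type*} [Fintype n] [Fintype m] [Fintype k] [DecidableEq n]

theorem Matrix.isSymmetricProjection_toEuclideanLin {P : Matrix n n ℝ} (hP : P.IsHermitian)
    (hPP : IsIdempotentElem P) : (toEuclideanLin P).IsSymmetricProjection :=
  ⟨hPP.map (toLpLinAlgEquiv 2), isSymmetric_toEuclideanLin_iff.mpr hP⟩

theorem frobenius_norm_sub_mul_transpose_mul_le [DecidableEq m] {E : Matrix n m ℝ}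
    (hE : Eᵀ * E = 1) (W : Matrix n k ℝ) : ‖W - E * (Eᵀ * W)‖ ≤ ‖W‖ := by
  have hidem : IsIdempotentElem (E * Eᵀ) := by
    rw [IsIdempotentElem, Matrix.mul_assoc, ← Matrix.mul_assoc Eᵀ, hE, Matrix.one_mul]
  have hherm : (1 - E * Eᵀ).IsHermitian := by
    simp [IsHermitian, conjTranspose_eq_transpose_of_trivial, transpose_sub]
  have hproj := isSymmetricProjection_toEuclideanLin hherm hidem.one_sub
  have hsub : W - E * (Eᵀ * W) = (1 - E * Eᵀ) * W := by
    rw [Matrix.sub_mul, Matrix.one_mul, Matrix.mul_assoc]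
  rw [hsub, ← one_mul ‖W‖]
  exact frobenius_norm_mul_le_of_forall_col zero_le_one fun j =>
    (hproj.norm_apply_le (WithLp.toLp 2 (W.col j))).trans_eq (one_mul _).symm

theorem infDist_range_mulLeft_eq [DecidableEq m] {E : Matrix n m ℝ} (hE : Eᵀ * E = 1)
    (X : Matrix n k ℝ) :
    infDist X (LinearMap.range (mulLeftLinearMap k ℝ E)) = ‖X - E * (Eᵀ * X)‖ := by
  refine le_antisymm ((infDist_le_dist_of_mem (LinearMap.mem_range_self _ (Eᵀ * X))).trans_eq
    (dist_eq_norm _ _)) ((le_infDist ⟨0, zero_mem _⟩).2 ?_)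
  rintro _ ⟨C, rfl⟩
  have hproj : X - E * (Eᵀ * X) = X - E * C - E * (Eᵀ * (X - E * C)) := by
    simp [Matrix.mul_sub, ← Matrix.mul_assoc, hE]
  rw [hproj, dist_eq_norm]
  exact frobenius_norm_sub_mul_transpose_mul_le hE _

theorem frobenius_norm_mul_le_of_transpose_mul_eq_zero {A : Matrix n n ℝ} (hA : A.IsSymm)
    {E : Matrix n m ℝ} {lam : ℝ} (hlam : 0 ≤ lam)
    (hfix : ∀ u, A *ᵥ u = u → u ∈ Submodule.span ℝ (Set.range E.col))
    (hspec : ∀ (μ : ℝ) (u : n → ℝ), u ≠ 0 → A *ᵥ u = μ • u → μ = 1 ∨ |μ| ≤ lam)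
    {W : Matrix n k ℝ} (hW : Eᵀ * W = 0) : ‖A * W‖ ≤ lam * ‖W‖ := by
  have hT : (toEuclideanLin A).IsSymmetric := isSymmetric_toEuclideanLin_iff.mpr <| by
    rwa [IsHermitian, conjTranspose_eq_transpose_of_trivial]
  have hspecT : ∀ (μ : ℝ) (u : EuclideanSpace ℝ n), u ≠ 0 → toEuclideanLin A u = μ • u →
      μ = 1 ∨ |μ| ≤ lam := fun μ u hu hAu =>
    hspec μ u.ofLp (by simpa using hu) (congrArg WithLp.ofLp hAu)
  refine frobenius_norm_mul_le_of_forall_col hlam fun j =>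
    hT.norm_apply_le_of_inner_fixed_eq_zero (w := WithLp.toLp 2 (W.col j)) hlam hspecT
      fun u hAu => ?_
  have hcol : Eᵀ *ᵥ W.col j = 0 := by rw [← col_mul, hW]; rfl
  rw [EuclideanSpace.inner_eq_star_dotProduct, star_trivial, dotProduct_comm]
  exact dotProduct_eq_zero_of_mem_span_col (hfix _ (congrArg WithLp.ofLp hAu)) hcol

theorem infDist_range_mulLeft_mul_le [DecidableEq m] {E : Matrix n m ℝ} (hE : Eᵀ * E = 1)
    {A : Matrix n n ℝ} (hAE : A * E = E) {lam : ℝ}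
    (hA : ∀ W : Matrix n k ℝ, Eᵀ * W = 0 → ‖A * W‖ ≤ lam * ‖W‖) (X : Matrix n k ℝ) :
    infDist (A * X) (LinearMap.range (mulLeftLinearMap k ℝ E)) ≤
      lam * infDist X (LinearMap.range (mulLeftLinearMap k ℝ E)) := by
  set R := X - E * (Eᵀ * X)
  have hR : Eᵀ * R = 0 := by simp [R, Matrix.mul_sub, ← Matrix.mul_assoc, hE]
  calc infDist (A * X) (LinearMap.range (mulLeftLinearMap k ℝ E))
      ≤ dist (A * X) (E * (Eᵀ * X)) := infDist_le_dist_of_mem (LinearMap.mem_range_self _ _)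
    _ = ‖A * R‖ := by rw [dist_eq_norm, Matrix.mul_sub, ← Matrix.mul_assoc A E, hAE]
    _ ≤ lam * ‖R‖ := hA R hR
    _ = lam * infDist X (LinearMap.range (mulLeftLinearMap k ℝ E)) := by
      rw [infDist_range_mulLeft_eq hE]

end Contraction

section RealSequence

theorem sub_le_mul_sub_of_le_mul_add {x y v c : ℝ} (hv : v ≠ 1) (h : y ≤ v * x + c) :
    y - c / (1 - v) ≤ v * (x - c / (1 - v)) := by
  have hc : c = c / (1 - v) - v * (c / (1 - v)) := by
    field_simp [sub_ne_zero.mpr hv.symm]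
  linarith

variable {a : ℕ → ℝ} {v r : ℝ}

theorem le_add_pow_mul_sub_of_forall (hv : 0 ≤ v) (h : ∀ l, a (l + 1) - r ≤ v * (a l - r))
    (l : ℕ) : a l ≤ r + v ^ l * (a 0 - r) := by
  induction l with
  | zero => simp
  | succ l ih =>
    have := mul_le_mul_of_nonneg_left (sub_le_iff_le_add'.mpr ih) hv
    rw [pow_succ']
    linarith [h l]

theorem limsup_le_of_le_of_tendsto {b : ℕ → ℝ} (ha : BddBelow (Set.range a))
    (hab : ∀ l, a l ≤ b l) (hb : Tendsto b atTop (nhds r)) : limsup a atTop ≤ r := by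
  rw [← hb.limsup_eq]
  exact limsup_le_limsup (.of_forall hab) ha.isBoundedUnder_of_range.isCoboundedUnder_le
    hb.isBoundedUnder_le

end RealSequence

/-- APPNP `H_{l+1} = (1-β) Â H_l + β H_0` converges to the cuboid `O(M, r)`
with `v = (1-β)λ` and `r = β d_M(H_0)/(1-v)`:
`d_M(H_{l+1}) - r ≤ v (d_M(H_l) - r)`, hence
`d_M(H_l) ≤ r + v^l (d_M(H_0) - r)` and `limsup d_M(H_l) ≤ r`. -/
theorem appnp_over_smoothing
    (N M C : ℕ) (hatA : Matrix (Fin N) (Fin N) ℝ) (hsymm : hatA.IsSymm)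
    (E : Matrix (Fin N) (Fin M) ℝ) (hortho : Eᵀ * E = 1)
    (lam : ℝ) (hlam0 : 0 ≤ lam) (hlam1 : lam < 1)
    (hEig1 : ∀ v : Fin N → ℝ, hatA.mulVec v = v ↔
      v ∈ Submodule.span ℝ (Set.range fun m => fun i => E i m))
    (hOther : ∀ (μ : ℝ) (v : Fin N → ℝ), v ≠ 0 → hatA.mulVec v = μ • v →
      μ = 1 ∨ |μ| ≤ lam)
    (β : ℝ) (hβ0 : 0 < β) (hβ1 : β ≤ 1)
    (MS : Set (Matrix (Fin N) (Fin C) ℝ))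
    (hMS : MS = {H | ∃ Cm : Matrix (Fin M) (Fin C) ℝ, H = E * Cm})
    (H : ℕ → Matrix (Fin N) (Fin C) ℝ)
    (hrec : ∀ l, H (l + 1) = (1 - β) • (hatA * H l) + β • H 0)
    (v r : ℝ) (hv : v = (1 - β) * lam)
    (hr : r = β * distTo MS (H 0) / (1 - v)) :
    (∀ l, distTo MS (H (l + 1)) - r ≤ v * (distTo MS (H l) - r)) ∧
    (∀ l, distTo MS (H l) ≤ r + v ^ l * (distTo MS (H 0) - r)) ∧
    limsup (fun l => distTo MS (H l)) atTop ≤ r := by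
  set S := LinearMap.range (mulLeftLinearMap (Fin C) ℝ E)
  have hdist : ∀ X, distTo MS X = infDist X S := fun X => by
    rw [distTo_eq_infDist, hMS]
    congr 1
    ext Y
    simp [S, eq_comm]
  simp only [hdist] at hr ⊢
  have hAE : hatA * E = E := ext_col fun j => by
    rw [col_mul]
    exact (hEig1 _).2 (Submodule.subset_span ⟨j, rfl⟩)
  have hcontr : ∀ X : Matrix (Fin N) (Fin C) ℝ, infDist (hatA * X) S ≤ lam * infDist X S :=
    infDist_range_mulLeft_mul_le hortho hAE fun W hW =>
      frobenius_norm_mul_le_of_transpose_mul_eq_zero hsymm hlam0 (fun u => (hEig1 u).1) hOther hW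
  have hv0 : 0 ≤ v := hv ▸ mul_nonneg (by linarith) hlam0
  have hv1 : v < 1 := by nlinarith
  have hstep : ∀ l, infDist (H (l + 1)) S ≤ v * infDist (H l) S + β * infDist (H 0) S := by
    intro l
    have hA := mul_le_mul_of_nonneg_left (hcontr (H l)) (sub_nonneg.2 hβ1)
    have hconv := hrec l ▸ S.infDist_smul_add_smul_le (sub_nonneg.2 hβ1) hβ0.le (hatA * H l) (H 0)
    rw [hv, mul_assoc]
    linarith
  have hmain : ∀ l, infDist (H (l + 1)) S - r ≤ v * (infDist (H l) S - r) := fun l =>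
    hr ▸ sub_le_mul_sub_of_le_mul_add hv1.ne (hstep l)
  have hbound := le_add_pow_mul_sub_of_forall (a := fun l => infDist (H l) S) hv0 hmain
  refine ⟨hmain, hbound, limsup_le_of_le_of_tendsto ⟨0, ?_⟩ hbound ?_⟩
  · rintro _ ⟨l, rfl⟩
    exact infDist_nonneg
  · simpa using ((tendsto_pow_atTop_nhds_zero_of_lt_one hv0 hv1).mul_const
      (infDist (H 0) S - r)).const_add r
end
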